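/- If H is a free abelian group, then the natural map from the Takasaki quandle T(H) to its enveloping group is injective, and T(H) is isomorphic to Q(G_{T(H)}, A) where A is a set of orbit representatives of cardinality |H : 2H|; moreover two elements x,y of T(H) lie in the same orbit if and only if x − y ∈ 2H. -/

import Mathlib

open Quandles

namespace GA

variable {G : Type*} [Group G]

/-- The equivalence relation on `A × G`: `(a, gh) ~ (a, h)` for `g ∈ C_G(a)`,
i.e. `(a,u) ~ (b,v)` iff `a = b` and `u * v⁻¹` centralizes `a`. -/
def rel (A : Set G) (p q : A × G) : Prop :=
  p.1 = q.1 ∧ p.2 * q.2⁻¹ ∈ Subgroup.centralizer ({(p.1 : G)} : Set G)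

theorem rel_equiv (A : Set G) : Equivalence (rel A) := by
  constructor
  · intro p
    exact ⟨rfl, by simpa using (Subgroup.centralizer ({(p.1 : G)} : Set G)).one_mem⟩
  · rintro p q ⟨h1, h2⟩
    refine ⟨h1.symm, ?_⟩
    have := (Subgroup.centralizer ({(p.1 : G)} : Set G)).inv_mem h2
    simpa [h1] using this
  · rintro p q r ⟨h1, h2⟩ ⟨h1', h2'⟩
    refine ⟨h1.trans h1', ?_⟩
    have := (Subgroup.centralizer ({(p.1 : G)} : Set G)).mul_mem h2 (by rw [h1]; exact h2')
    simpa [mul_assoc] using this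

instance setoid (A : Set G) : Setoid (A × G) := ⟨rel A, rel_equiv A⟩

/-- The `(G,A)`-quandle as a set: the quotient of `A × G` by `(a,gh) ~ (a,h)`, `g ∈ C_G(a)`. -/
def Q (G : Type*) [Group G] (A : Set G) : Type _ := Quotient (setoid A)

/-- The class of `(a,u)` in `Q(G,A)`. -/
def mk {A : Set G} (a : A) (u : G) : Q G A := Quotient.mk (setoid A) (a, u)

/-- representative-level operation `(a,u) * (b,v) = (a, u v⁻¹ b v)`,
written as a left action of `(b,v)` on `(a,u)`. -/
def pop {A : Set G} (x y : A × G) : A × G := (y.1, y.2 * x.2⁻¹ * (x.1 : G) * x.2)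

/-- representative-level inverse operation `(a,u) *⁻¹ (b,v) = (a, u v⁻¹ b⁻¹ v)`. -/
def pinv {A : Set G} (x y : A × G) : A × G := (y.1, y.2 * x.2⁻¹ * (x.1 : G)⁻¹ * x.2)

theorem centralizer_mem_iff {a u : G} : u ∈ Subgroup.centralizer ({a} : Set G) ↔ u * a = a * u := by
  rw [Subgroup.mem_centralizer_singleton_iff]

theorem conj_indep {b v d : G} (h : d * b = b * d) : ((d * v))⁻¹ * b * (d * v) = v⁻¹ * b * v := by
  have h' : d⁻¹ * b * d = b := by
    rw [mul_assoc, ← h]; group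
  calc (d * v)⁻¹ * b * (d * v) = v⁻¹ * (d⁻¹ * b * d) * v := by group
    _ = v⁻¹ * b * v := by rw [h']

theorem pop_well {A : Set G} : ∀ (x₁ y₁ x₂ y₂ : A × G), rel A x₁ x₂ → rel A y₁ y₂ →
    rel A (pop x₁ y₁) (pop x₂ y₂) := by
  rintro ⟨b₁, v₁⟩ ⟨a₁, u₁⟩ ⟨b₂, v₂⟩ ⟨a₂, u₂⟩ ⟨hb, hv⟩ ⟨ha, hu⟩
  refine ⟨ha, ?_⟩
  simp only [pop]
  rw [centralizer_mem_iff] at hv hu ⊢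
  have hb' : (b₁ : G) = (b₂ : G) := congrArg _ hb
  have key : v₁⁻¹ * (b₁ : G) * v₁ = v₂⁻¹ * (b₂ : G) * v₂ := by
    conv_lhs => rw [show v₁ = (v₁ * v₂⁻¹) * v₂ by group, hb']
    exact conj_indep (by rw [← hb']; exact hv)
  have heq : u₁ * v₁⁻¹ * (b₁:G) * v₁ * (u₂ * v₂⁻¹ * (b₂:G) * v₂)⁻¹ = u₁ * u₂⁻¹ := by
    calc u₁ * v₁⁻¹ * (b₁:G) * v₁ * (u₂ * v₂⁻¹ * (b₂:G) * v₂)⁻¹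
        = u₁ * (v₁⁻¹ * (b₁:G) * v₁) * (v₂⁻¹ * (b₂:G) * v₂)⁻¹ * u₂⁻¹ := by group
      _ = u₁ * (v₂⁻¹ * (b₂:G) * v₂) * (v₂⁻¹ * (b₂:G) * v₂)⁻¹ * u₂⁻¹ := by rw [key]
      _ = u₁ * u₂⁻¹ := by group
  rw [heq]
  exact hu

theorem pinv_well {A : Set G} : ∀ (x₁ y₁ x₂ y₂ : A × G), rel A x₁ x₂ → rel A y₁ y₂ →
    rel A (pinv x₁ y₁) (pinv x₂ y₂) := by
  rintro ⟨b₁, v₁⟩ ⟨a₁, u₁⟩ ⟨b₂, v₂⟩ ⟨a₂, u₂⟩ ⟨hb, hv⟩ ⟨ha, hu⟩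
  refine ⟨ha, ?_⟩
  simp only [pinv]
  rw [centralizer_mem_iff] at hv hu ⊢
  have hb' : (b₁ : G) = (b₂ : G) := congrArg _ hb
  have hvc : (v₁ * v₂⁻¹) * (b₂ : G)⁻¹ = (b₂ : G)⁻¹ * (v₁ * v₂⁻¹) := by
    have : Commute (v₁ * v₂⁻¹) (b₂ : G) := by rw [← hb']; exact hv
    exact this.inv_right
  have key : v₁⁻¹ * (b₁ : G)⁻¹ * v₁ = v₂⁻¹ * (b₂ : G)⁻¹ * v₂ := by
    conv_lhs => rw [show v₁ = (v₁ * v₂⁻¹) * v₂ by group, hb']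
    exact conj_indep hvc
  have heq : u₁ * v₁⁻¹ * (b₁:G)⁻¹ * v₁ * (u₂ * v₂⁻¹ * (b₂:G)⁻¹ * v₂)⁻¹ = u₁ * u₂⁻¹ := by
    calc u₁ * v₁⁻¹ * (b₁:G)⁻¹ * v₁ * (u₂ * v₂⁻¹ * (b₂:G)⁻¹ * v₂)⁻¹
        = u₁ * (v₁⁻¹ * (b₁:G)⁻¹ * v₁) * (v₂⁻¹ * (b₂:G)⁻¹ * v₂)⁻¹ * u₂⁻¹ := by group
      _ = u₁ * (v₂⁻¹ * (b₂:G)⁻¹ * v₂) * (v₂⁻¹ * (b₂:G)⁻¹ * v₂)⁻¹ * u₂⁻¹ := by rw [key]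
      _ = u₁ * u₂⁻¹ := by group
  rw [heq]
  exact hu

instance quandle (G : Type*) [Group G] (A : Set G) : Quandle (Q G A) where
  act := Quotient.map₂ pinv (fun _ _ h _ _ h' => pinv_well _ _ _ _ h h')
  invAct := Quotient.map₂ pop (fun _ _ h _ _ h' => pop_well _ _ _ _ h h')
  self_distrib := by
    rintro ⟨⟨b,v⟩⟩ ⟨⟨c,w⟩⟩ ⟨⟨a,u⟩⟩
    refine Quotient.sound ⟨rfl, ?_⟩
    simp only [pinv]
    rw [centralizer_mem_iff]
    group
  left_inv := by
    rintro ⟨⟨b,v⟩⟩ ⟨⟨a,u⟩⟩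
    refine Quotient.sound ⟨rfl, ?_⟩
    simp only [pop, pinv]
    rw [centralizer_mem_iff]
    group
  right_inv := by
    rintro ⟨⟨b,v⟩⟩ ⟨⟨a,u⟩⟩
    refine Quotient.sound ⟨rfl, ?_⟩
    simp only [pop, pinv]
    rw [centralizer_mem_iff]
    group
  fix := by
    rintro ⟨⟨a,u⟩⟩
    refine Quotient.sound ⟨rfl, ?_⟩
    simp only [pinv]
    rw [centralizer_mem_iff]
    have : (u * u⁻¹ * (a:G)⁻¹ * u) * u⁻¹ = (a : G)⁻¹ := by group
    rw [this]
    group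

@[simp] theorem invAct_mk {A : Set G} (a b : A) (u v : G) :
    Rack.invAct (mk b v) (mk a u) = mk a (u * v⁻¹ * (b : G) * v) := rfl

@[simp] theorem act_mk {A : Set G} (a b : A) (u v : G) :
    Shelf.act (mk b v) (mk a u) = mk a (u * v⁻¹ * (b : G)⁻¹ * v) := rfl

end GA

/-- Two elements of a rack lie in the same orbit under the inner automorphism group iff they
are related by the equivalence relation generated by `a ~ x ◃ a` and `a ~ x ◃⁻¹ a`. -/
def sameOrbit (Q : Type*) [Rack Q] : Q → Q → Prop :=
  Relation.EqvGen (fun a b => ∃ x : Q, b = x ◃ a ∨ b = x ◃⁻¹ a)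

/-- The Takasaki quandle of an abelian group `H`: the operation is `x * y = 2y - x`,
i.e. `y` acts on `x` by `x ↦ 2y - x`. -/
instance takasaki (H : Type*) [AddCommGroup H] : Quandle H where
  act y x := y + y - x
  invAct y x := y + y - x
  self_distrib := by intros; (try dsimp only); abel1
  left_inv := by intro x y; dsimp only; abel1
  right_inv := by intro x y; dsimp only; abel1
  fix := by intro x; (try dsimp only); abel1

/-- The subgroup `2H` of an abelian group `H`. -/
def twoH (H : Type*) [AddCommGroup H] : AddSubgroup H :=
  AddMonoidHom.range (AddMonoidHom.mk' (fun h : H => h + h) (fun a b => by abel))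

/-! The enveloping group `G` of a rack `R` acts on `R`, and `θ = toEnvelGroup R` is equivariant
for this action and conjugation: `u θ(a) u⁻¹ = θ(u • a)`. Since the orbits of this action are
the orbits of `R`, the image of `θ` is the union of the conjugacy classes of `θ(A)` for any set
`A` of orbit representatives, and the elements of `θ(A)` are pairwise non-conjugate once `θ` is
injective. On the other hand `(a, u) ↦ u⁻¹ a u` embeds `Q(G, θ(A))` into the conjugation quandle
of `G` with exactly that image, so `R ≅ Q(G, θ(A))`.

In the Takasaki quandle `x ◃ y - y = 2(x - y)`, so orbits are cosets of `2H`; and `θ(x)` moves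
`0` to `2x`, so `θ` is injective as soon as `H` is torsion-free. -/

open Function

theorem inv_mul_mul_eq_iff_mul_inv_mem_centralizer {G : Type*} [Group G] {a u v : G} :
    u⁻¹ * a * u = v⁻¹ * a * v ↔ u * v⁻¹ ∈ Subgroup.centralizer {a} := by
  rw [Subgroup.mem_centralizer_singleton_iff]
  constructor <;> intro h
  · calc u * v⁻¹ * a = u * (v⁻¹ * a * v) * v⁻¹ := by group
      _ = a * (u * v⁻¹) := by rw [← h]; group
  · calc u⁻¹ * a * u = u⁻¹ * (a * (u * v⁻¹)) * v := by group
      _ = v⁻¹ * a * v := by rw [← h]; group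

theorem ShelfHom.exists_equiv_of_range_eq {X Y Z : Type*} [Shelf X] [Shelf Y] [Shelf Z]
    {f : X →◃ Z} {g : Y →◃ Z} (hf : Injective f) (hg : Injective g)
    (h : Set.range f = Set.range g) : ∃ e : X ≃ Y, ∀ x y, e (x ◃ y) = e x ◃ e y := by
  let e : X ≃ Y := (Equiv.ofInjective f hf).trans
    ((Equiv.setCongr h).trans (Equiv.ofInjective g hg).symm)
  have hge (x : X) : g (e x) = f x := Equiv.apply_ofInjective_symm hg _
  exact ⟨e, fun x y => hg <| by rw [g.map_act, hge, hge, hge, f.map_act]⟩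

namespace GA

variable {G : Type*} [Group G]

def toConj (A : Set G) : Q G A →◃ Quandle.Conj G where
  toFun := Quotient.lift (fun p : A × G => p.2⁻¹ * p.1 * p.2) fun _ _ ⟨h₁, h₂⟩ => by
    rw [← h₁]
    exact inv_mul_mul_eq_iff_mul_inv_mem_centralizer.mpr h₂
  map_act' := by
    rintro ⟨b, v⟩ ⟨a, u⟩
    change (u * v⁻¹ * (b : G)⁻¹ * v)⁻¹ * a * (u * v⁻¹ * (b : G)⁻¹ * v)
      = v⁻¹ * b * v * (u⁻¹ * a * u) * (v⁻¹ * b * v)⁻¹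
    group

@[simp] theorem toConj_mk {A : Set G} (a : A) (u : G) : toConj A (mk a u) = u⁻¹ * a * u := rfl

theorem toConj_injective {A : Set G} (hA : ∀ a ∈ A, ∀ b ∈ A, IsConj a b → a = b) :
    Injective (toConj A) := by
  rintro ⟨⟨a, u⟩⟩ ⟨⟨b, v⟩⟩ h
  change u⁻¹ * a * u = v⁻¹ * b * v at h
  have hab : v * u⁻¹ * a * (v * u⁻¹)⁻¹ = b :=
    calc v * u⁻¹ * a * (v * u⁻¹)⁻¹ = v * (u⁻¹ * a * u) * v⁻¹ := by group
      _ = b := by rw [h]; group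
  obtain rfl : a = b := Subtype.ext <| hA a a.2 b b.2 <| isConj_iff.mpr ⟨_, hab⟩
  exact Quotient.sound ⟨rfl, inv_mul_mul_eq_iff_mul_inv_mem_centralizer.mp h⟩

theorem range_toConj (A : Set G) : Set.range (toConj A) = {g | ∃ a ∈ A, IsConj a g} := by
  ext g
  constructor
  · rintro ⟨⟨⟨a, ha⟩, u⟩, rfl⟩
    exact ⟨a, ha, isConj_iff.mpr ⟨u⁻¹, by rw [inv_inv]; rfl⟩⟩
  · rintro ⟨a, ha, hg⟩
    obtain ⟨c, rfl⟩ := isConj_iff.mp hg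
    exact ⟨mk ⟨a, ha⟩ c⁻¹, by simp⟩

end GA

namespace Rack

variable {R : Type*} [Rack R]

theorem EnvelGroup.induction_on {P : EnvelGroup R → Prop} (u : EnvelGroup R)
    (incl : ∀ x, P (toEnvelGroup R x)) (one : P 1) (mul : ∀ u v, P u → P v → P (u * v))
    (inv : ∀ u, P u → P u⁻¹) : P u := by
  induction u using Quotient.inductionOn with | h w => ?_
  induction w with
  | unit => exact one
  | incl x => exact incl x
  | mul p q hp hq => exact mul _ _ hp hq
  | inv p hp => exact inv _ hp

theorem mul_toEnvelGroup_mul_inv (u : EnvelGroup R) (a : R) :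
    u * toEnvelGroup R a * u⁻¹ = toEnvelGroup R (envelAction u a) := by
  induction u using EnvelGroup.induction_on generalizing a with
  | incl x => exact ((toEnvelGroup R).map_act).symm
  | one => simp
  | mul u v hu hv => rw [map_mul, Equiv.Perm.mul_apply, ← hu, ← hv]; group
  | inv u hu =>
    have := hu (envelAction u⁻¹ a)
    rw [← Equiv.Perm.mul_apply, ← map_mul, mul_inv_cancel, map_one, Equiv.Perm.one_apply] at this
    rw [← this]; group

theorem sameOrbit_iff_exists_envelAction {a b : R} :
    sameOrbit R a b ↔ ∃ u : EnvelGroup R, envelAction u a = b := by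
  constructor
  · intro h
    induction h with
    | rel a b hab =>
      obtain ⟨x, rfl | rfl⟩ := hab
      · exact ⟨toEnvelGroup R x, rfl⟩
      · exact ⟨(toEnvelGroup R x)⁻¹, rfl⟩
    | refl a => exact ⟨1, rfl⟩
    | symm a b _ ih =>
      obtain ⟨u, rfl⟩ := ih
      exact ⟨u⁻¹, by simp⟩
    | trans a b c _ _ ihab ihbc =>
      obtain ⟨u, rfl⟩ := ihab
      obtain ⟨v, rfl⟩ := ihbc
      exact ⟨v * u, by rw [map_mul, Equiv.Perm.mul_apply]⟩
  · rintro ⟨u, rfl⟩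
    induction u using EnvelGroup.induction_on generalizing a with
    | incl x => exact .rel _ _ ⟨x, .inl rfl⟩
    | one => exact .refl _
    | mul u v hu hv => rw [map_mul, Equiv.Perm.mul_apply]; exact hv.trans _ _ _ hu
    | inv u hu =>
      have := hu (a := envelAction u⁻¹ a)
      rw [← Equiv.Perm.mul_apply, ← map_mul, mul_inv_cancel, map_one, Equiv.Perm.one_apply] at this
      exact this.symm

theorem isConj_toEnvelGroup_iff {a : R} {g : EnvelGroup R} :
    IsConj (toEnvelGroup R a) g ↔ ∃ b, sameOrbit R a b ∧ toEnvelGroup R b = g := by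
  simp_rw [isConj_iff, sameOrbit_iff_exists_envelAction, mul_toEnvelGroup_mul_inv]
  constructor
  · rintro ⟨u, rfl⟩
    exact ⟨_, ⟨u, rfl⟩, rfl⟩
  · rintro ⟨_, ⟨u, rfl⟩, rfl⟩
    exact ⟨u, rfl⟩

theorem exists_equiv_GA_Q_of_injective (hθ : Injective (toEnvelGroup R)) {A : Set R}
    (hA : ∀ q : R, ∃! a : R, a ∈ A ∧ sameOrbit R a q) :
    ∃ f : R ≃ GA.Q (EnvelGroup R) ((fun x : R => (toEnvelGroup R x : EnvelGroup R)) '' A),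
      ∀ x y : R, f (x ◃ y) = f x ◃ f y := by
  refine ShelfHom.exists_equiv_of_range_eq hθ (GA.toConj_injective ?_) ?_
  · rintro _ ⟨a, ha, rfl⟩ _ ⟨b, hb, rfl⟩ hab
    obtain ⟨c, hac, hcb⟩ := isConj_toEnvelGroup_iff.mp hab
    obtain rfl := hθ hcb
    rw [(hA c).unique ⟨ha, hac⟩ ⟨hb, .refl c⟩]
  · rw [GA.range_toConj]
    ext g
    constructor
    · rintro ⟨q, rfl⟩
      obtain ⟨a, ⟨ha, haq⟩, -⟩ := hA q
      exact ⟨_, ⟨a, ha, rfl⟩, isConj_toEnvelGroup_iff.mpr ⟨q, haq, rfl⟩⟩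
    · rintro ⟨_, ⟨a, -, rfl⟩, hag⟩
      obtain ⟨b, -, rfl⟩ := isConj_toEnvelGroup_iff.mp hag
      exact ⟨b, rfl⟩

end Rack

section Takasaki

variable {H : Type*} [AddCommGroup H]

theorem takasaki_act (x y : H) : x ◃ y = x + x - y := rfl

theorem takasaki_invAct (x y : H) : x ◃⁻¹ y = x + x - y := rfl

theorem mem_twoH {x : H} : x ∈ twoH H ↔ ∃ h : H, h + h = x := Iff.rfl

theorem takasaki_sameOrbit_iff (x y : H) : sameOrbit H x y ↔ x - y ∈ twoH H := by
  rw [← QuotientAddGroup.eq_iff_sub_mem]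
  constructor
  · intro h
    induction h with
    | rel a b hab =>
      refine QuotientAddGroup.eq_iff_sub_mem.mpr (mem_twoH.mpr ?_)
      obtain ⟨z, rfl | rfl⟩ := hab
      · exact ⟨a - z, by rw [takasaki_act]; abel⟩
      · exact ⟨a - z, by rw [takasaki_invAct]; abel⟩
    | refl => rfl
    | symm _ _ _ ih => exact ih.symm
    | trans _ _ _ _ _ ihab ihbc => exact ihab.trans ihbc
  · intro h
    obtain ⟨k, hk⟩ := mem_twoH.mp (QuotientAddGroup.eq_iff_sub_mem.mp h)
    refine .rel _ _ ⟨x - k, .inl ?_⟩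
    rw [takasaki_act, show x - k + (x - k) - x = x - (k + k) by abel, hk, sub_sub_cancel]

theorem takasaki_toEnvelGroup_injective [IsAddTorsionFree H] :
    Injective (Rack.toEnvelGroup H) := by
  intro x y h
  have h2 : x + x - 0 = y + y - 0 := congrArg (fun u => Rack.envelAction u (0 : H)) h
  rw [sub_zero, sub_zero, ← two_nsmul, ← two_nsmul] at h2
  exact IsAddTorsionFree.nsmul_right_injective two_ne_zero h2

theorem takasaki_nonempty_equiv_quotient_twoH {A : Set H}
    (hA : ∀ q : H, ∃! a : H, a ∈ A ∧ sameOrbit H a q) : Nonempty (A ≃ H ⧸ twoH H) := by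
  refine ⟨(AddSubgroup.IsComplement.leftQuotientEquiv ?_).symm⟩
  rw [AddSubgroup.isComplement_iff_existsUnique_neg_add_mem]
  intro q
  obtain ⟨a, ⟨ha, haq⟩, huniq⟩ := hA q
  refine ⟨⟨a, ha⟩, ?_, fun b hb => Subtype.ext (huniq b ⟨b.2, ?_⟩)⟩
  · change -a + q ∈ twoH H
    rwa [neg_add_eq_sub, sub_mem_comm_iff, ← takasaki_sameOrbit_iff]
  · change -(b : H) + q ∈ twoH H at hb
    rwa [takasaki_sameOrbit_iff, sub_mem_comm_iff, ← neg_add_eq_sub]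

end Takasaki

/-- If `H` is a free abelian group then: the natural map `θ` from the Takasaki quandle `T(H)`
to its enveloping group is injective; two elements of `T(H)` lie in the same orbit iff their
difference lies in `2H`; and for any set `A` of orbit representatives, `T(H)` is isomorphic
to the `(G_{T(H)}, θ(A))`-quandle, with `A` of cardinality `|H : 2H|`. -/
theorem takasaki_free_abelian_GA (H : Type*) [AddCommGroup H] [Module.Free ℤ H] :
    Function.Injective (fun x : H => (Rack.toEnvelGroup H x : Rack.EnvelGroup H)) ∧
    (∀ x y : H, sameOrbit H x y ↔ x - y ∈ twoH H) ∧
    ∀ A : Set H, (∀ q : H, ∃! a : H, a ∈ A ∧ sameOrbit H a q) →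
      (∃ f : H ≃ GA.Q (Rack.EnvelGroup H)
          ((fun x : H => (Rack.toEnvelGroup H x : Rack.EnvelGroup H)) '' A),
        (∀ x y : H, f (x ◃ y) = f x ◃ f y)) ∧
      Nonempty (A ≃ (H ⧸ twoH H)) := by
  have := IsAddTorsionFree.of_isTorsionFree ℤ H
  have hθ : Injective (Rack.toEnvelGroup H) := takasaki_toEnvelGroup_injective
  exact ⟨hθ, takasaki_sameOrbit_iff, fun A hA =>
    ⟨Rack.exists_equiv_GA_Q_of_injective hθ hA, takasaki_nonempty_equiv_quotient_twoH hA⟩⟩
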